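/- arXiv:2305.13496 — 4 statements merged into one kernel-verified Lean document; each statement's English description precedes it below -/
import Mathlib

section
/- The intersection of SL(2, ℝ) with K_c⁺ = { ![![a, b], ![b/c², a]] : a > 0, a² - b²/c² > 0 } equals the set of Lorentz matrices L_c(u) = κ_c(u)·![![1, u], ![u/c², 1]] with u ∈ (-c, c), where κ_c(u) = 1/√(1 - u²/c²). -/
/-!
Writing `M = !![a, b; b/c², a]`, the condition `det M = 1` reads `a² - b²/c² = 1`. Put `u = b/a`;
then `1 - u²/c² = 1/a²`, so for `a > 0` the Lorentz factor `κ_c(u)` is exactly `a` and `M = L_c(u)`,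
while `a² > b²/c²` forces `|u| < c`. Conversely `L_c(u) = !![κ, κu; κu/c², κ]` with
`κ² (1 - u²/c²) = 1`.
-/

/-- The Lorentz matrix `L_c(u) = κ_c(u)·![![1,u],![u/c²,1]]`, `κ_c(u) = 1/√(1-u²/c²)`. -/
noncomputable def lorentz (c u : ℝ) : Matrix (Fin 2) (Fin 2) ℝ :=
  (1 / Real.sqrt (1 - u ^ 2 / c ^ 2)) • !![1, u; u / c ^ 2, 1]

noncomputable def lorentzFactor (c u : ℝ) : ℝ :=
  1 / Real.sqrt (1 - u ^ 2 / c ^ 2)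

lemma det_fin_two_of_div_sq (a b c : ℝ) : !![a, b; b / c ^ 2, a].det = a ^ 2 - b ^ 2 / c ^ 2 := by
  rw [Matrix.det_fin_two_of]
  ring

lemma lorentz_eq (c u : ℝ) :
    lorentz c u = !![lorentzFactor c u, lorentzFactor c u * u;
      lorentzFactor c u * u / c ^ 2, lorentzFactor c u] := by
  ext i j
  fin_cases i <;> fin_cases j <;> simp [lorentz, lorentzFactor, mul_div_assoc]

section

variable {c u : ℝ}

lemma one_sub_sq_div_sq_pos (hu : u ∈ Set.Ioo (-c) c) : 0 < 1 - u ^ 2 / c ^ 2 := by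
  have hc : 0 < c := neg_lt_self_iff.mp (hu.1.trans hu.2)
  rw [sub_pos, div_lt_one (by positivity)]
  exact sq_lt_sq' hu.1 hu.2

lemma lorentzFactor_pos (hu : u ∈ Set.Ioo (-c) c) : 0 < lorentzFactor c u :=
  one_div_pos.mpr (Real.sqrt_pos.mpr (one_sub_sq_div_sq_pos hu))

lemma lorentzFactor_sq_sub_sq (hu : u ∈ Set.Ioo (-c) c) :
    lorentzFactor c u ^ 2 - (lorentzFactor c u * u) ^ 2 / c ^ 2 = 1 := by
  have hpos := one_sub_sq_div_sq_pos hu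
  have hsq : lorentzFactor c u ^ 2 = 1 / (1 - u ^ 2 / c ^ 2) := by
    rw [lorentzFactor, div_pow, Real.sq_sqrt hpos.le, one_pow]
  calc lorentzFactor c u ^ 2 - (lorentzFactor c u * u) ^ 2 / c ^ 2
      = lorentzFactor c u ^ 2 * (1 - u ^ 2 / c ^ 2) := by ring
    _ = 1 := by rw [hsq, one_div_mul_cancel hpos.ne']

end

section

variable {a b c : ℝ}

lemma div_mem_Ioo_of_sq_sub_sq_div_pos (hc : 0 < c) (ha : 0 < a) (h : 0 < a ^ 2 - b ^ 2 / c ^ 2) :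
    b / a ∈ Set.Ioo (-c) c := by
  have hsq : (b / a) ^ 2 < c ^ 2 := by
    rw [div_pow, div_lt_iff₀ (by positivity)]
    rw [sub_pos, div_lt_iff₀ (by positivity)] at h
    linarith
  exact abs_lt.mp (abs_lt_of_sq_lt_sq hsq hc.le)

lemma lorentzFactor_div_eq (ha : 0 < a) (h : a ^ 2 - b ^ 2 / c ^ 2 = 1) :
    lorentzFactor c (b / a) = a := by
  have h' : 1 - (b / a) ^ 2 / c ^ 2 = (1 / a) ^ 2 := by
    field_simp
    linear_combination h
  rw [lorentzFactor, h', Real.sqrt_sq (by positivity), one_div_one_div]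

end

/-- `SL(2,ℝ) ∩ K_c⁺` equals the set of Lorentz matrices `L_c(u)`, `u ∈ (-c, c)`. -/
theorem SL2_inter_Kc_plus (c : ℝ) (hc : 0 < c) :
    {M : Matrix (Fin 2) (Fin 2) ℝ | M.det = 1 ∧
        ∃ a b : ℝ, 0 < a ∧ a ^ 2 - b ^ 2 / c ^ 2 > 0 ∧ M = !![a, b; b / c ^ 2, a]} =
      {M : Matrix (Fin 2) (Fin 2) ℝ | ∃ u ∈ Set.Ioo (-c) c, M = lorentz c u} := by
  ext M
  constructor
  · rintro ⟨hdet, a, b, ha, hpos, rfl⟩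
    rw [det_fin_two_of_div_sq] at hdet
    refine ⟨b / a, div_mem_Ioo_of_sq_sub_sq_div_pos hc ha hpos, ?_⟩
    rw [lorentz_eq, lorentzFactor_div_eq ha hdet, mul_div_cancel₀ b ha.ne']
  · rintro ⟨u, hu, rfl⟩
    have hdet := lorentzFactor_sq_sub_sq hu
    refine ⟨?_, lorentzFactor c u, lorentzFactor c u * u, lorentzFactor_pos hu, ?_, lorentz_eq c u⟩
    · rw [lorentz_eq, det_fin_two_of_div_sq, hdet]
    · rw [hdet]
      exact one_pos
end

section
/- K_c⁺ is isomorphic as a group to the direct product of SO⁺_c(1,1) = {L_c(u) : u ∈ (-c, c)} and the multiplicative group of positive reals ℝ⁺: every element of K_c⁺ factors uniquely as λ·L_c(u) with λ > 0 and u ∈ (-c, c). -/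
lemma one_sub_sq_pos (c u : ℝ) (hc : 0 < c) (hu : u ∈ Set.Ioo (-c) c) :
    0 < 1 - u ^ 2 / c ^ 2 := by
  have habs : |u| < c := abs_lt.2 ⟨hu.1, hu.2⟩
  have h : u ^ 2 < c ^ 2 := by nlinarith [abs_nonneg u, sq_abs u]
  have hc2 : (0 : ℝ) < c ^ 2 := by positivity
  have := (div_lt_one hc2).2 h
  linarith

lemma sqrt_factor (c a b : ℝ) (hc : 0 < c) (ha : 0 < a) :
    Real.sqrt (a ^ 2 - b ^ 2 / c ^ 2) = a * Real.sqrt (1 - (b / a) ^ 2 / c ^ 2) := by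
  have h : a ^ 2 - b ^ 2 / c ^ 2 = a ^ 2 * (1 - (b / a) ^ 2 / c ^ 2) := by
    field_simp
  rw [h, Real.sqrt_mul (sq_nonneg a), Real.sqrt_sq ha.le]

lemma smul_lorentz_eq (c u lam : ℝ) (hc : 0 < c) (hu : u ∈ Set.Ioo (-c) c) :
    lam • lorentz c u = !![lam / Real.sqrt (1 - u ^ 2 / c ^ 2),
      lam / Real.sqrt (1 - u ^ 2 / c ^ 2) * u;
      lam / Real.sqrt (1 - u ^ 2 / c ^ 2) * u / c ^ 2,
      lam / Real.sqrt (1 - u ^ 2 / c ^ 2)] := by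
  unfold lorentz
  rw [smul_smul]
  ext i j
  fin_cases i <;> fin_cases j <;>
    simp [Matrix.smul_apply, mul_one_div, div_mul_eq_mul_div, mul_div_assoc] <;> ring

lemma one_add_div_pos (c u u' : ℝ) (hc : 0 < c) (hu : u ∈ Set.Ioo (-c) c)
    (hu' : u' ∈ Set.Ioo (-c) c) : 0 < 1 + u * u' / c ^ 2 := by
  have h1 : |u| < c := abs_lt.2 ⟨hu.1, hu.2⟩
  have h2 : |u'| < c := abs_lt.2 ⟨hu'.1, hu'.2⟩
  have hc2' : (0 : ℝ) < c ^ 2 := by positivity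
  have habs : |u * u'| < c ^ 2 := by
    rw [abs_mul]
    nlinarith [abs_nonneg u, abs_nonneg u']
  have hlb := (abs_lt.1 habs).1
  have : -1 < u * u' / c ^ 2 := by
    rw [neg_lt, ← neg_div, div_lt_one hc2']
    linarith
  linarith

lemma lorentz_core_mul (c u u' : ℝ) (hc0 : c ≠ 0) (hd0 : c ^ 2 + u * u' ≠ 0) :
    (!![1, u; u / c ^ 2, 1] : Matrix (Fin 2) (Fin 2) ℝ) * !![1, u'; u' / c ^ 2, 1] =
      (1 + u * u' / c ^ 2) • !![1, (u + u') / (1 + u * u' / c ^ 2);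
        (u + u') / (1 + u * u' / c ^ 2) / c ^ 2, 1] := by
  have hd0' : 1 + u * u' / c ^ 2 ≠ 0 := by
    intro h
    apply hd0
    field_simp at h
    linarith
  rw [Matrix.mul_fin_two]
  ext i j
  fin_cases i <;> fin_cases j <;> simp [Matrix.smul_apply, ← mul_div_assoc, mul_div_cancel₀ _ hd0'] <;> ring

lemma lorentz_mul (c u u' : ℝ) (hc : 0 < c) (hu : u ∈ Set.Ioo (-c) c)
    (hu' : u' ∈ Set.Ioo (-c) c) :
    lorentz c u * lorentz c u' = lorentz c ((u + u') / (1 + u * u' / c ^ 2)) := by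
  have hc0 : c ≠ 0 := hc.ne'
  have hd : 0 < 1 + u * u' / c ^ 2 := one_add_div_pos c u u' hc hu hu'
  have hd0 : 1 + u * u' / c ^ 2 ≠ 0 := hd.ne'
  have hpu : 0 < 1 - u ^ 2 / c ^ 2 := one_sub_sq_pos c u hc hu
  have hpu' : 0 < 1 - u' ^ 2 / c ^ 2 := one_sub_sq_pos c u' hc hu'
  have hsu : 0 < Real.sqrt (1 - u ^ 2 / c ^ 2) := Real.sqrt_pos.2 hpu
  have hsu' : 0 < Real.sqrt (1 - u' ^ 2 / c ^ 2) := Real.sqrt_pos.2 hpu'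
  have hsu0 : Real.sqrt (1 - u ^ 2 / c ^ 2) ≠ 0 := hsu.ne'
  have hsu0' : Real.sqrt (1 - u' ^ 2 / c ^ 2) ≠ 0 := hsu'.ne'
  have hc2 : (0 : ℝ) < c ^ 2 := by positivity
  have hd0' : c ^ 2 + u * u' ≠ 0 := by
    have h := mul_pos hd hc2
    have he : (1 + u * u' / c ^ 2) * c ^ 2 = c ^ 2 + u * u' := by field_simp
    rw [he] at h
    exact h.ne'
  have hw : 1 - ((u + u') / (1 + u * u' / c ^ 2)) ^ 2 / c ^ 2 =
      (1 - u ^ 2 / c ^ 2) * (1 - u' ^ 2 / c ^ 2) / (1 + u * u' / c ^ 2) ^ 2 := by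
    field_simp
    ring
  have hsw : Real.sqrt (1 - ((u + u') / (1 + u * u' / c ^ 2)) ^ 2 / c ^ 2) =
      Real.sqrt (1 - u ^ 2 / c ^ 2) * Real.sqrt (1 - u' ^ 2 / c ^ 2)
        / (1 + u * u' / c ^ 2) := by
    rw [hw, Real.sqrt_div (by positivity), Real.sqrt_mul hpu.le, Real.sqrt_sq hd.le]
  unfold lorentz
  rw [Matrix.smul_mul, Matrix.mul_smul, smul_smul, lorentz_core_mul c u u' hc0 hd0',
    smul_smul, hsw]
  congr 1
  rw [one_div (Real.sqrt (1 - u ^ 2 / c ^ 2) * Real.sqrt (1 - u' ^ 2 / c ^ 2) / (1 + u * u' / c ^ 2))]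
  field_simp

/-- `K_c⁺` is isomorphic to `SO⁺_c(1,1) × ℝ⁺`: every element of `K_c⁺` factors uniquely as
`λ • L_c(u)` with `λ > 0` and `u ∈ (-c, c)`, and this factorization is multiplicative. -/
theorem Kc_plus_iso_SO_times_Rpos (c : ℝ) (hc : 0 < c) :
    (∀ a b : ℝ, 0 < a → a ^ 2 - b ^ 2 / c ^ 2 > 0 →
      ∃! p : ℝ × ℝ, 0 < p.1 ∧ p.2 ∈ Set.Ioo (-c) c ∧
        (!![a, b; b / c ^ 2, a] : Matrix (Fin 2) (Fin 2) ℝ) = p.1 • lorentz c p.2) ∧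
    (∀ lam lam' : ℝ, ∀ u ∈ Set.Ioo (-c) c, ∀ u' ∈ Set.Ioo (-c) c,
      (lam • lorentz c u) * (lam' • lorentz c u') =
        (lam * lam') • lorentz c ((u + u') / (1 + u * u' / c ^ 2))) := by
  constructor
  · intro a b ha hab
    have hc2 : (0 : ℝ) < c ^ 2 := by positivity
    have hb2 : b ^ 2 < c ^ 2 * a ^ 2 := by
      have : b ^ 2 / c ^ 2 < a ^ 2 := by linarith
      calc b ^ 2 = b ^ 2 / c ^ 2 * c ^ 2 := by field_simp
        _ < a ^ 2 * c ^ 2 := by nlinarith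
        _ = c ^ 2 * a ^ 2 := by ring
    have habs : |b / a| < c := by
      rw [abs_div, abs_of_pos ha, div_lt_iff₀ ha]
      nlinarith [abs_nonneg b, sq_abs b, mul_pos hc ha]
    have hu : b / a ∈ Set.Ioo (-c) c := by
      rcases abs_lt.1 habs with ⟨h1, h2⟩
      exact ⟨h1, h2⟩
    have hlam : 0 < Real.sqrt (a ^ 2 - b ^ 2 / c ^ 2) := Real.sqrt_pos.2 hab
    have hs : 0 < Real.sqrt (1 - (b / a) ^ 2 / c ^ 2) :=
      Real.sqrt_pos.2 (one_sub_sq_pos c (b / a) hc hu)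
    have hfac : Real.sqrt (a ^ 2 - b ^ 2 / c ^ 2)
        = a * Real.sqrt (1 - (b / a) ^ 2 / c ^ 2) := sqrt_factor c a b hc ha
    have hkey : Real.sqrt (a ^ 2 - b ^ 2 / c ^ 2) / Real.sqrt (1 - (b / a) ^ 2 / c ^ 2)
        = a := by
      rw [hfac, mul_div_assoc, div_self hs.ne', mul_one]
    refine ⟨(Real.sqrt (a ^ 2 - b ^ 2 / c ^ 2), b / a), ⟨hlam, hu, ?_⟩, ?_⟩
    · rw [smul_lorentz_eq c (b / a) _ hc hu, hkey]
      have hba : a * (b / a) = b := by field_simp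
      rw [hba]
    · rintro ⟨mu, v⟩ ⟨hmu, hv, heq⟩
      rw [smul_lorentz_eq c v mu hc hv] at heq
      have hsv : 0 < Real.sqrt (1 - v ^ 2 / c ^ 2) :=
        Real.sqrt_pos.2 (one_sub_sq_pos c v hc hv)
      have h00 := congrFun (congrFun heq 0) 0
      have h01 := congrFun (congrFun heq 0) 1
      simp at h00 h01
      have hb : b = a * v := by rw [h01, h00]
      have hva : v = b / a := by rw [hb, mul_div_cancel_left₀ _ ha.ne']
      have hmu' : mu = a * Real.sqrt (1 - v ^ 2 / c ^ 2) := by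
        rw [h00, div_mul_cancel₀ _ hsv.ne']
      have hmu_eq : mu = Real.sqrt (a ^ 2 - b ^ 2 / c ^ 2) := by
        rw [hmu', hva]; exact hfac.symm
      exact Prod.ext_iff.2 ⟨hmu_eq, hva⟩
  · intro lam lam' u hu u' hu'
    rw [Matrix.smul_mul, Matrix.mul_smul, smul_smul, lorentz_mul c u u' hc hu hu']
end

section
/- (Deformed Poincaré group also gives relativistic addition of velocities) Fix a ∈ ℝ and c > 0, and let ℓ(u) = exp(a·artanh(u/c)) for u ∈ (-c, c). If coordinates are related by (x, t) = ℓ(u)·L_c(u)·(x', t') + (b₁, b₂), and a line satisfies x' = x₀' + v'·t' with v' ∈ (-c, c), then for any two distinct points on it, (x₂ - x₁)/(t₂ - t₁) = (u + v')/(1 + u·v'/c²). -/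
/-- Inverse hyperbolic tangent. -/
noncomputable def artanh (x : ℝ) : ℝ := (1 / 2) * Real.log ((1 + x) / (1 - x))

/-- The deformed Poincaré group `SP⁺_{c,a}(1,1)` gives the same relativistic addition of
velocities: with `ℓ(u) = exp(a·artanh(u/c))` and coordinates related by
`(x,t) = ℓ(u)·L_c(u)·(x',t') + (b₁,b₂)`, a line `x' = x₀' + v'·t'` has velocity
`(u + v')/(1 + uv'/c²)` in the unprimed coordinates. -/
theorem deformed_relativistic_velocity_addition (c a : ℝ) (hc : 0 < c)
    (u v' : ℝ) (hu : u ∈ Set.Ioo (-c) c) (hv' : v' ∈ Set.Ioo (-c) c)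
    (b₁ b₂ x₀' : ℝ)
    (x₁ t₁ x₂ t₂ x₁' t₁' x₂' t₂' : ℝ)
    (h1 : ![x₁, t₁] =
      (Real.exp (a * artanh (u / c)) • lorentz c u).mulVec ![x₁', t₁'] + ![b₁, b₂])
    (h2 : ![x₂, t₂] =
      (Real.exp (a * artanh (u / c)) • lorentz c u).mulVec ![x₂', t₂'] + ![b₁, b₂])
    (hl1 : x₁' = x₀' + v' * t₁') (hl2 : x₂' = x₀' + v' * t₂')
    (hne : t₁' ≠ t₂') :
    (x₂ - x₁) / (t₂ - t₁) = (u + v') / (1 + u * v' / c ^ 2) := by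
  obtain ⟨hu1, hu2⟩ := hu
  obtain ⟨hv1, hv2⟩ := hv'
  have hc2 : (0:ℝ) < c ^ 2 := by positivity
  have hsq : 0 < 1 - u ^ 2 / c ^ 2 := by
    rw [sub_pos, div_lt_one hc2]
    nlinarith
  have hs : 0 < Real.sqrt (1 - u ^ 2 / c ^ 2) := Real.sqrt_pos.mpr hsq
  set k : ℝ := Real.exp (a * artanh (u / c)) * (1 / Real.sqrt (1 - u ^ 2 / c ^ 2)) with hk
  have hkpos : 0 < k := by positivity
  have hx1 := congrFun h1 0
  have ht1 := congrFun h1 1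
  have hx2 := congrFun h2 0
  have ht2 := congrFun h2 1
  simp only [lorentz, Matrix.mulVec, Matrix.smul_apply, Matrix.smul_cons, Matrix.smul_empty,
    Matrix.cons_val', Matrix.cons_val_zero, Matrix.cons_val_one, Matrix.head_cons,
    Matrix.empty_val', Matrix.cons_val_fin_one, Matrix.head_fin_const, Pi.add_apply,
    dotProduct, Fin.sum_univ_two, smul_eq_mul, Matrix.smul_of, Matrix.of_apply,
    Matrix.cons_val_zero, Matrix.cons_val_one] at hx1 ht1 hx2 ht2
  have hden : 0 < 1 + u * v' / c ^ 2 := by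
    have h : -(u * v') / c ^ 2 < 1 := (div_lt_one hc2).mpr (by nlinarith)
    rw [neg_div] at h
    linarith
  have hX : x₂ - x₁ = k * (v' + u) * (t₂' - t₁') := by
    rw [hx1, hx2, hl1, hl2, hk]; ring
  have hT : t₂ - t₁ = k * (u * v' / c ^ 2 + 1) * (t₂' - t₁') := by
    rw [ht1, ht2, hl1, hl2, hk]; ring
  rw [hX, hT]
  have hne' : t₂' - t₁' ≠ 0 := sub_ne_zero.mpr (Ne.symm hne)
  rw [mul_div_mul_right _ _ hne', mul_div_mul_left _ _ (ne_of_gt hkpos)]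
  ring_nf
end

section
/- For u ∈ (-1, 1), the Lorentz matrix L(u) = (1/√(1-u²))·![![1, u], ![u, 1]] admits the Iwasawa decomposition L(u) = R(α) * ![![1, tan 2α], ![0, 1]] * ![![1/√(cos 2α), 0], ![0, √(cos 2α)]], where α = arcsin(u/√(1+u²)) and R(α) is the rotation matrix by angle α. -/
open Real

noncomputable def lorentz1 (u : ℝ) : Matrix (Fin 2) (Fin 2) ℝ :=
  (1 / Real.sqrt (1 - u ^ 2)) • !![1, u; u, 1]

noncomputable def rotM (α : ℝ) : Matrix (Fin 2) (Fin 2) ℝ :=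
  !![Real.cos α, -Real.sin α; Real.sin α, Real.cos α]

/-- The Iwasawa decomposition of the Lorentz matrix `L(u)`:
`L(u) = R(α) * ![![1, tan 2α],![0,1]] * ![![1/√(cos 2α), 0],![0, √(cos 2α)]]` with
`α = arcsin(u/√(1+u²))`. -/
theorem lorentz_iwasawa (u : ℝ) (hu : u ∈ Set.Ioo (-1 : ℝ) 1) :
    lorentz1 u =
      rotM (Real.arcsin (u / Real.sqrt (1 + u ^ 2))) *
        !![1, Real.tan (2 * Real.arcsin (u / Real.sqrt (1 + u ^ 2))); 0, 1] *
        !![1 / Real.sqrt (Real.cos (2 * Real.arcsin (u / Real.sqrt (1 + u ^ 2)))), 0;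
           0, Real.sqrt (Real.cos (2 * Real.arcsin (u / Real.sqrt (1 + u ^ 2))))] := by
  obtain ⟨hu1, hu2⟩ := hu
  have h1 : (0:ℝ) < 1 - u ^ 2 := by nlinarith
  have h2 : (0:ℝ) < 1 + u ^ 2 := by nlinarith
  set s := Real.sqrt (1 + u ^ 2) with hs
  set t := Real.sqrt (1 - u ^ 2) with ht
  have hspos : 0 < s := Real.sqrt_pos.mpr h2
  have htpos : 0 < t := Real.sqrt_pos.mpr h1
  have hs2 : s ^ 2 = 1 + u ^ 2 := Real.sq_sqrt h2.le
  have ht2 : t ^ 2 = 1 - u ^ 2 := Real.sq_sqrt h1.le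
  clear_value s t
  set α := Real.arcsin (u / s) with hα
  have habs : |u / s| ≤ 1 := by
    rw [abs_div, abs_of_pos hspos, div_le_one hspos]
    have : |u| ^ 2 ≤ s ^ 2 := by rw [hs2, sq_abs]; nlinarith
    nlinarith [abs_nonneg u, hspos]
  have hsin : Real.sin α = u / s :=
    Real.sin_arcsin (by linarith [(abs_le.mp habs).1]) (abs_le.mp habs).2
  have hcos : Real.cos α = 1 / s := by
    rw [hα, Real.cos_arcsin, div_pow, hs2,
      show 1 - u ^ 2 / (1 + u ^ 2) = 1 / (1 + u ^ 2) by field_simp; ring,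
      Real.sqrt_div' 1 (by linarith), Real.sqrt_one, hs]
  have hcos2 : Real.cos (2 * α) = (1 - u ^ 2) / (1 + u ^ 2) := by
    rw [Real.cos_two_mul, hcos, div_pow, hs2]; field_simp; ring
  have hsin2 : Real.sin (2 * α) = 2 * u / (1 + u ^ 2) := by
    
    rw [Real.sin_two_mul, hsin, hcos, mul_assoc, div_mul_div_comm, mul_one, ← sq, hs2]
    ring
  have htan : Real.tan (2 * α) = 2 * u / (1 - u ^ 2) := by
    rw [Real.tan_eq_sin_div_cos, hsin2, hcos2]
    field_simp
  have hsq : Real.sqrt (Real.cos (2 * α)) = t / s := by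
    rw [hcos2, show (1 - u ^ 2) / (1 + u ^ 2) = (1 - u^2) / (1 + u^2) from rfl,
      Real.sqrt_div h1.le, hs, ht]
  ext i j
  fin_cases i <;> fin_cases j <;>
    simp [lorentz1, rotM, Matrix.mul_apply, Fin.sum_univ_two, hsin, hcos, htan, hsq, ← ht] <;>
    field_simp
  all_goals try ring
  all_goals try linear_combination (u * s - u ^ 3 * s) * hs2 - (u * s + u ^ 3 * s) * ht2
  · linear_combination (u - u ^ 3) * hs2 - (u + u ^ 3) * ht2
  · linear_combination (1 - u ^ 2) * hs2 - (1 + u ^ 2) * ht2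
end
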